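/- arXiv:2301.13108 — 8 statements merged into one kernel-verified Lean document; each statement's English description precedes it below -/
import Mathlib

section
/- For each i ∈ ℤ let Sol_i be a finite family of axis-parallel unit squares, all but finitely many of the families empty, such that every square in Sol_i is strictly crossed by the line y = i or by the line y = i+1. Then ply(⋃_{i∈ℤ} Sol_i) ≤ max_{i∈ℤ} ( ply(Sol_{i−1}) + ply(Sol_i) + ply(Sol_{i+1}) ); in particular ply(⋃_{i∈ℤ} Sol_i) ≤ 3 · max_{i∈ℤ} ply(Sol_i). -/
open scoped Classical

/-- The ply of a finite family `S` of subsets of the plane: the maximum,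
over points `p` of the plane, of the number of members of `S` containing `p`. -/
noncomputable def ply (S : Finset (Set (ℝ × ℝ))) : ℕ :=
  sSup {n | ∃ p : ℝ × ℝ, n = (S.filter fun s => p ∈ s).card}

/-- The axis-parallel unit square with lower-left corner `(a, b)`. -/
def unitSquare (a b : ℝ) : Set (ℝ × ℝ) :=
  Set.Icc a (a + 1) ×ˢ Set.Icc b (b + 1)

lemma card_le_ply (S : Finset (Set (ℝ × ℝ))) (p : ℝ × ℝ) :
    (S.filter fun s => p ∈ s).card ≤ ply S :=
  le_csSup ⟨S.card, by rintro n ⟨q, rfl⟩; exact Finset.card_filter_le _ _⟩ ⟨p, rfl⟩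

lemma ply_le_card (S : Finset (Set (ℝ × ℝ))) : ply S ≤ S.card :=
  csSup_le ⟨_, ⟨((0 : ℝ), (0 : ℝ)), rfl⟩⟩
    (by rintro n ⟨q, rfl⟩; exact Finset.card_filter_le _ _)

/-- Merging slab solutions: if for each `i ∈ ℤ`, `Sol i` is a finite family of unit
squares strictly crossed by `y = i` or `y = i+1`, all but finitely many families empty
(the support being contained in the finite set `I`), then the ply of the union of all the
families is at most `max_i (ply (Sol (i-1)) + ply (Sol i) + ply (Sol (i+1)))`, and in
particular at most `3 * max_i ply (Sol i)`. -/
theorem ply_union_slabs (Sol : ℤ → Finset (Set (ℝ × ℝ)))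
    (hsq : ∀ i : ℤ, ∀ s ∈ Sol i, ∃ a b : ℝ, s = unitSquare a b ∧
      ((b < (i : ℝ) ∧ (i : ℝ) < b + 1) ∨ (b < (i : ℝ) + 1 ∧ (i : ℝ) + 1 < b + 1)))
    (I : Finset ℤ) (hI : ∀ i ∉ I, Sol i = ∅) :
    ply (I.biUnion Sol) ≤
        sSup {n | ∃ i : ℤ, n = ply (Sol (i - 1)) + ply (Sol i) + ply (Sol (i + 1))} ∧
      ply (I.biUnion Sol) ≤ 3 * sSup {n | ∃ i : ℤ, n = ply (Sol i)} := by
  set C : ℕ := I.sup fun k => (Sol k).card with hC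
  have hply_bd : ∀ i : ℤ, ply (Sol i) ≤ C := by
    intro i
    by_cases hi : i ∈ I
    · exact (ply_le_card _).trans (Finset.le_sup (f := fun k => (Sol k).card) hi)
    · rw [hI i hi]
      have h := ply_le_card (∅ : Finset (Set (ℝ × ℝ)))
      simpa using h.trans (by simp)
  -- key pointwise bound
  have key : ∀ p : ℝ × ℝ,
      ((I.biUnion Sol).filter fun s => p ∈ s).card ≤
        ply (Sol (⌊p.2⌋ - 1)) + ply (Sol ⌊p.2⌋) + ply (Sol (⌊p.2⌋ + 1)) := by
    intro p
    set j : ℤ := ⌊p.2⌋ with hj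
    have hsub : ((I.biUnion Sol).filter fun s => p ∈ s) ⊆
        ({j - 1, j, j + 1} : Finset ℤ).biUnion fun i => (Sol i).filter fun s => p ∈ s := by
      intro s hs
      rw [Finset.mem_filter, Finset.mem_biUnion] at hs
      obtain ⟨⟨i, hiI, hsi⟩, hps⟩ := hs
      obtain ⟨a, b, rfl, hcross⟩ := hsq i _ hsi
      have hy : b ≤ p.2 ∧ p.2 ≤ b + 1 := by
        have h2 := hps
        simp only [unitSquare, Set.mem_prod, Set.mem_Icc] at h2
        exact ⟨h2.2.1, h2.2.2⟩
      have hjle : (j : ℝ) ≤ p.2 := Int.floor_le _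
      have hjlt : p.2 < (j : ℝ) + 1 := Int.lt_floor_add_one _
      have hji : i ∈ ({j - 1, j, j + 1} : Finset ℤ) := by
        rcases hcross with ⟨h1, h2⟩ | ⟨h1, h2⟩
        · have l1 : j - 1 < i := by
            have : ((j : ℝ)) - 1 < (i : ℝ) := by linarith [hy.1, hy.2]
            exact_mod_cast (by push_cast; linarith : ((j - 1 : ℤ) : ℝ) < (i : ℝ))
          have l2 : i < j + 2 := by
            have : (i : ℝ) < (j : ℝ) + 2 := by linarith [hy.1, hy.2]
            exact_mod_cast (by push_cast; linarith : ((i : ℤ) : ℝ) < ((j + 2 : ℤ) : ℝ))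
          simp only [Finset.mem_insert, Finset.mem_singleton]
          omega
        · have l1 : j - 1 < i + 1 := by
            have : ((j : ℝ)) - 1 < (i : ℝ) + 1 := by linarith [hy.1, hy.2]
            exact_mod_cast (by push_cast; linarith : ((j - 1 : ℤ) : ℝ) < ((i + 1 : ℤ) : ℝ))
          have l2 : i + 1 < j + 2 := by
            have : (i : ℝ) + 1 < (j : ℝ) + 2 := by linarith [hy.1, hy.2]
            exact_mod_cast (by push_cast; linarith : ((i + 1 : ℤ) : ℝ) < ((j + 2 : ℤ) : ℝ))
          simp only [Finset.mem_insert, Finset.mem_singleton]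
          omega
      exact Finset.mem_biUnion.2 ⟨i, hji, Finset.mem_filter.2 ⟨hsi, hps⟩⟩
    have hsum : ∑ i ∈ ({j - 1, j, j + 1} : Finset ℤ), ((Sol i).filter fun s => p ∈ s).card
        = ((Sol (j - 1)).filter fun s => p ∈ s).card
          + ((Sol j).filter fun s => p ∈ s).card
          + ((Sol (j + 1)).filter fun s => p ∈ s).card := by
      rw [Finset.sum_insert (by simp only [Finset.mem_insert, Finset.mem_singleton]; omega),
        Finset.sum_insert (by simp only [Finset.mem_singleton]; omega),
        Finset.sum_singleton]
      ring
    calc ((I.biUnion Sol).filter fun s => p ∈ s).card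
        ≤ (({j - 1, j, j + 1} : Finset ℤ).biUnion fun i =>
            (Sol i).filter fun s => p ∈ s).card := Finset.card_le_card hsub
      _ ≤ ∑ i ∈ ({j - 1, j, j + 1} : Finset ℤ), ((Sol i).filter fun s => p ∈ s).card :=
          Finset.card_biUnion_le
      _ = _ := hsum
      _ ≤ ply (Sol (j - 1)) + ply (Sol j) + ply (Sol (j + 1)) :=
          add_le_add (add_le_add (card_le_ply _ p) (card_le_ply _ p)) (card_le_ply _ p)
  have hA : {n | ∃ p : ℝ × ℝ, n = ((I.biUnion Sol).filter fun s => p ∈ s).card}.Nonempty :=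
    ⟨_, ⟨((0 : ℝ), (0 : ℝ)), rfl⟩⟩
  constructor
  · have hTbdd : BddAbove {n | ∃ i : ℤ, n = ply (Sol (i - 1)) + ply (Sol i) + ply (Sol (i + 1))} := by
      refine ⟨3 * C, ?_⟩
      rintro n ⟨i, rfl⟩
      have h1 := hply_bd (i - 1); have h2 := hply_bd i; have h3 := hply_bd (i + 1)
      omega
    refine csSup_le hA ?_
    rintro n ⟨p, rfl⟩
    exact (key p).trans (le_csSup hTbdd ⟨⌊p.2⌋, rfl⟩)
  · have hUbdd : BddAbove {n | ∃ i : ℤ, n = ply (Sol i)} := by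
      refine ⟨C, ?_⟩
      rintro n ⟨i, rfl⟩
      exact hply_bd i
    have hle : ∀ k : ℤ, ply (Sol k) ≤ sSup {n | ∃ i : ℤ, n = ply (Sol i)} :=
      fun k => le_csSup hUbdd ⟨k, rfl⟩
    refine csSup_le hA ?_
    rintro n ⟨p, rfl⟩
    have := key p
    have h1 := hle (⌊p.2⌋ - 1); have h2 := hle ⌊p.2⌋; have h3 := hle (⌊p.2⌋ + 1)
    omega
end

section
/- Let P be a finite set of points in ℝ², none with integer y-coordinate, and let S be a finite family of axis-parallel unit squares, none with its bottom edge at an integer height, such that some subfamily of S covers P. For each i ∈ ℤ set P_i = {p ∈ P : i < y(p) < i+1} and S_i = {s ∈ S : s is strictly crossed by y = i or by y = i+1}. Let c ≥ 1 be a real number, and suppose that for each i with P_i ≠ ∅ there is a family C_i ⊆ S_i covering P_i with ply(C_i) ≤ c · minPly(P_i, S_i) (and C_i = ∅ when P_i = ∅). Then ⋃_{i∈ℤ} C_i covers P and ply(⋃_{i∈ℤ} C_i) ≤ 3c · minPly(P, S). -/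
open scoped Classical

/-- A family `C` covers a point set `P` if every point of `P` lies in some member of `C`. -/
def Covers (C : Finset (Set (ℝ × ℝ))) (P : Set (ℝ × ℝ)) : Prop :=
  ∀ p ∈ P, ∃ s ∈ C, p ∈ s

/-- The minimum ply over subfamilies of `S` that cover `P`. -/
noncomputable def minPly (P : Set (ℝ × ℝ)) (S : Finset (Set (ℝ × ℝ))) : ℕ :=
  sInf {n | ∃ C : Finset (Set (ℝ × ℝ)), C ⊆ S ∧ Covers C P ∧ ply C = n}

lemma ply_bdd (D : Finset (Set (ℝ × ℝ))) :
    BddAbove {n | ∃ p : ℝ × ℝ, n = (D.filter fun s => p ∈ s).card} :=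
  ⟨D.card, by rintro n ⟨q, rfl⟩; exact Finset.card_filter_le _ _⟩

lemma count_le_ply (D : Finset (Set (ℝ × ℝ))) (p : ℝ × ℝ) :
    (D.filter fun s => p ∈ s).card ≤ ply D := by
  rw [ply]
  exact le_csSup (ply_bdd D) ⟨p, rfl⟩

lemma ply_exists_point (D : Finset (Set (ℝ × ℝ))) :
    ∃ p : ℝ × ℝ, ply D = (D.filter fun s => p ∈ s).card := by
  have hne : {n | ∃ p : ℝ × ℝ, n = (D.filter fun s => p ∈ s).card}.Nonempty :=
    ⟨(D.filter fun s => ((0 : ℝ), (0 : ℝ)) ∈ s).card, ((0 : ℝ), (0 : ℝ)), rfl⟩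
  exact Nat.sSup_mem hne (ply_bdd D)

lemma ply_mono {D E : Finset (Set (ℝ × ℝ))} (h : D ⊆ E) : ply D ≤ ply E := by
  obtain ⟨p, hp⟩ := ply_exists_point D
  rw [hp]
  exact le_trans (Finset.card_le_card (Finset.filter_subset_filter _ h)) (count_le_ply E p)

lemma ply_empty : ply (∅ : Finset (Set (ℝ × ℝ))) = 0 := by
  obtain ⟨p, hp⟩ := ply_exists_point ∅
  simpa using hp

/-- Theorem 3 of the paper: a `c`-approximation for each unit-height horizontal slab
subproblem yields a `3c`-approximation for the full minimum ply cover problem with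
axis-parallel unit squares (no point at integer height, no square bottom at integer
height). -/
theorem slab_decomposition_three_c (P : Finset (ℝ × ℝ)) (S : Finset (Set (ℝ × ℝ)))
    (c : ℝ) (hc : 1 ≤ c)
    (hP : ∀ p ∈ P, ¬ ∃ k : ℤ, (k : ℝ) = p.2)
    (hS : ∀ s ∈ S, ∃ a b : ℝ, s = unitSquare a b ∧ ¬ ∃ k : ℤ, (k : ℝ) = b)
    (hcov : ∃ C : Finset (Set (ℝ × ℝ)), C ⊆ S ∧ Covers C ↑P)
    (Pi : ℤ → Set (ℝ × ℝ))
    (hPi : ∀ i : ℤ, Pi i = {p : ℝ × ℝ | p ∈ P ∧ (i : ℝ) < p.2 ∧ p.2 < (i : ℝ) + 1})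
    (Si : ℤ → Finset (Set (ℝ × ℝ)))
    (hSi : ∀ i : ℤ, Si i = S.filter fun s => ∃ a b : ℝ, s = unitSquare a b ∧
      ((b < (i : ℝ) ∧ (i : ℝ) < b + 1) ∨ (b < (i : ℝ) + 1 ∧ (i : ℝ) + 1 < b + 1)))
    (C : ℤ → Finset (Set (ℝ × ℝ)))
    (hCsub : ∀ i : ℤ, C i ⊆ Si i)
    (hCcov : ∀ i : ℤ, (Pi i).Nonempty →
      Covers (C i) (Pi i) ∧ (ply (C i) : ℝ) ≤ c * (minPly (Pi i) (Si i) : ℝ))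
    (hCempty : ∀ i : ℤ, Pi i = ∅ → C i = ∅)
    (I : Finset ℤ) (hI : ∀ i ∉ I, C i = ∅) :
    Covers (I.biUnion C) ↑P ∧
      (ply (I.biUnion C) : ℝ) ≤ 3 * c * (minPly ↑P S : ℝ) := by
  obtain ⟨C0, hC0S, hC0cov⟩ := hcov
  -- Geometry 1: a square of `S` containing a point of slab `i` lies in `Si i`.
  have geo1 : ∀ (i : ℤ) (p : ℝ × ℝ), p ∈ Pi i → ∀ s ∈ S, p ∈ s → s ∈ Si i := by
    intro i p hp s hsS hps
    rw [hPi] at hp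
    obtain ⟨hpP, h1, h2⟩ := hp
    obtain ⟨a, b, rfl, hb⟩ := hS s hsS
    rw [unitSquare, Set.mem_prod, Set.mem_Icc, Set.mem_Icc] at hps
    obtain ⟨-, hy1, hy2⟩ := hps
    have hbne : b ≠ (i : ℝ) := fun h => hb ⟨i, h.symm⟩
    rw [hSi, Finset.mem_filter]
    refine ⟨hsS, a, b, rfl, ?_⟩
    rcases lt_or_gt_of_ne hbne with hlt | hgt
    · exact Or.inl ⟨hlt, by linarith⟩
    · exact Or.inr ⟨by linarith, by linarith⟩
  -- Geometry 2: a square of `Si i` containing `q` forces `i` near `⌊q.2⌋`.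
  have geo2 : ∀ (i : ℤ) (s : Set (ℝ × ℝ)) (q : ℝ × ℝ), s ∈ Si i → q ∈ s →
      i ∈ ({⌊q.2⌋ - 1, ⌊q.2⌋, ⌊q.2⌋ + 1} : Finset ℤ) := by
    intro i s q hsi hqs
    rw [hSi, Finset.mem_filter] at hsi
    obtain ⟨-, a, b, rfl, hcase⟩ := hsi
    rw [unitSquare, Set.mem_prod, Set.mem_Icc, Set.mem_Icc] at hqs
    obtain ⟨-, hy1, hy2⟩ := hqs
    have hf1 : (⌊q.2⌋ : ℝ) ≤ q.2 := Int.floor_le _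
    have hf2 : q.2 < (⌊q.2⌋ : ℝ) + 1 := Int.lt_floor_add_one _
    have hi1 : (i : ℝ) < (⌊q.2⌋ : ℝ) + 2 := by
      rcases hcase with ⟨ha, hb⟩ | ⟨ha, hb⟩ <;> linarith
    have hi2 : (⌊q.2⌋ : ℝ) - 2 < (i : ℝ) := by
      rcases hcase with ⟨ha, hb⟩ | ⟨ha, hb⟩ <;> linarith
    have hi1' : i < ⌊q.2⌋ + 2 := by exact_mod_cast hi1
    have hi2' : ⌊q.2⌋ - 2 < i := by exact_mod_cast hi2
    simp only [Finset.mem_insert, Finset.mem_singleton]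
    omega
  -- A minimum-ply cover of `P` exists.
  have hsetne : {n | ∃ C' : Finset (Set (ℝ × ℝ)), C' ⊆ S ∧ Covers C' ↑P ∧ ply C' = n}.Nonempty :=
    ⟨ply C0, C0, hC0S, hC0cov, rfl⟩
  have hminx : ∃ Cm : Finset (Set (ℝ × ℝ)),
      Cm ⊆ S ∧ Covers Cm ↑P ∧ ply Cm = minPly ↑P S :=
    Nat.sInf_mem hsetne
  -- Each slab subproblem has smaller min ply.
  have hslab : ∀ i : ℤ, minPly (Pi i) (Si i) ≤ minPly ↑P S := by
    intro i
    obtain ⟨Cm, hCmS, hCmcov, hCmply⟩ := hminx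
    have hcov' : Covers (Cm ∩ Si i) (Pi i) := by
      intro p hp
      have hpP : p ∈ (↑P : Set (ℝ × ℝ)) := by
        rw [hPi] at hp; exact Finset.mem_coe.2 hp.1
      obtain ⟨s, hsCm, hps⟩ := hCmcov p hpP
      exact ⟨s, Finset.mem_inter.2 ⟨hsCm, geo1 i p hp s (hCmS hsCm) hps⟩, hps⟩
    calc minPly (Pi i) (Si i) ≤ ply (Cm ∩ Si i) :=
          Nat.sInf_le ⟨Cm ∩ Si i, Finset.inter_subset_right, hcov', rfl⟩
      _ ≤ ply Cm := ply_mono Finset.inter_subset_left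
      _ = minPly ↑P S := hCmply
  have hm0 : (0 : ℝ) ≤ (minPly ↑P S : ℝ) := Nat.cast_nonneg _
  have hc0 : (0 : ℝ) ≤ c := by linarith
  -- Each slab family has ply at most `c * minPly P S`.
  have hslabR : ∀ i : ℤ, (ply (C i) : ℝ) ≤ c * (minPly ↑P S : ℝ) := by
    intro i
    rcases eq_or_ne (Pi i) ∅ with he | hne
    · rw [hCempty i he, ply_empty]
      exact_mod_cast mul_nonneg hc0 hm0
    · have hne' : (Pi i).Nonempty := Set.nonempty_iff_ne_empty.2 hne
      have h1 := (hCcov i hne').2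
      have h2 : (minPly (Pi i) (Si i) : ℝ) ≤ (minPly ↑P S : ℝ) := by
        exact_mod_cast hslab i
      calc (ply (C i) : ℝ) ≤ c * (minPly (Pi i) (Si i) : ℝ) := h1
        _ ≤ c * (minPly ↑P S : ℝ) := by nlinarith
  -- Coverage.
  have hcover : Covers (I.biUnion C) ↑P := by
    intro p hpP
    have hpy := hP p (Finset.mem_coe.1 hpP)
    have hne : (⌊p.2⌋ : ℝ) ≠ p.2 := fun h => hpy ⟨⌊p.2⌋, h⟩
    have h1 : (⌊p.2⌋ : ℝ) < p.2 := lt_of_le_of_ne (Int.floor_le _) hne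
    have h2 : p.2 < (⌊p.2⌋ : ℝ) + 1 := Int.lt_floor_add_one _
    have hpi : p ∈ Pi ⌊p.2⌋ := by
      rw [hPi]; exact ⟨Finset.mem_coe.1 hpP, h1, h2⟩
    obtain ⟨hcovi, -⟩ := hCcov ⌊p.2⌋ ⟨p, hpi⟩
    obtain ⟨s, hsCi, hps⟩ := hcovi p hpi
    have hiI : ⌊p.2⌋ ∈ I := by
      by_contra h
      rw [hI _ h] at hsCi
      exact absurd hsCi (Finset.notMem_empty s)
    exact ⟨s, Finset.mem_biUnion.2 ⟨⌊p.2⌋, hiI, hsCi⟩, hps⟩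
  refine ⟨hcover, ?_⟩
  obtain ⟨q, hq⟩ := ply_exists_point (I.biUnion C)
  set J : Finset ℤ := {⌊q.2⌋ - 1, ⌊q.2⌋, ⌊q.2⌋ + 1} with hJ
  have hcount : ((I.biUnion C).filter fun s => q ∈ s).card ≤ ∑ i ∈ J, ply (C i) := by
    rw [Finset.filter_biUnion]
    calc (I.biUnion fun i => (C i).filter fun s => q ∈ s).card
        ≤ ∑ i ∈ I, ((C i).filter fun s => q ∈ s).card := Finset.card_biUnion_le
      _ = ∑ i ∈ I ∩ J, ((C i).filter fun s => q ∈ s).card := by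
          apply (Finset.sum_subset Finset.inter_subset_left ?_).symm
          intro i hiI hiIJ
          have hiJ : i ∉ J := fun h => hiIJ (Finset.mem_inter.2 ⟨hiI, h⟩)
          rw [Finset.card_eq_zero, Finset.filter_eq_empty_iff]
          intro s hsCi hqs
          exact hiJ (geo2 i s q (hCsub i hsCi) hqs)
      _ ≤ ∑ i ∈ J, ((C i).filter fun s => q ∈ s).card :=
          Finset.sum_le_sum_of_subset Finset.inter_subset_right
      _ ≤ ∑ i ∈ J, ply (C i) := Finset.sum_le_sum fun i _ => count_le_ply _ q
  have hJcard : J.card ≤ 3 := by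
    calc J.card ≤ ({⌊q.2⌋, ⌊q.2⌋ + 1} : Finset ℤ).card + 1 := Finset.card_insert_le _ _
      _ ≤ (({⌊q.2⌋ + 1} : Finset ℤ).card + 1) + 1 := by
          exact Nat.add_le_add_right (Finset.card_insert_le _ _) 1
      _ = 3 := by simp
  have hstep : (ply (I.biUnion C) : ℝ) ≤ ∑ i ∈ J, (ply (C i) : ℝ) := by
    rw [hq]
    exact_mod_cast hcount
  calc (ply (I.biUnion C) : ℝ) ≤ ∑ i ∈ J, (ply (C i) : ℝ) := hstep
    _ ≤ ∑ _i ∈ J, c * (minPly ↑P S : ℝ) := Finset.sum_le_sum fun i _ => hslabR i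
    _ = (J.card : ℝ) * (c * (minPly ↑P S : ℝ)) := by
        rw [Finset.sum_const, nsmul_eq_mul]
    _ ≤ 3 * (c * (minPly ↑P S : ℝ)) := by
        have : (J.card : ℝ) ≤ 3 := by exact_mod_cast hJcard
        nlinarith [mul_nonneg hc0 hm0]
    _ = 3 * c * (minPly ↑P S : ℝ) := by ring
end

section
/- Let t1 = [a1, a1+1] × [b1, b1+1], t2 = [a2, a2+1] × [b2, b2+1], t3 = [a3, a3+1] × [b3, b3+1] be axis-parallel unit squares with a1 ≤ a2 ≤ a3 ≤ a1 + 1, b1 ≤ b2, b3 ≤ b2, and b1 ≥ 0, b3 ≥ 0. Then t2 ∩ {(x,y) ∈ ℝ² : y ≤ 1} ⊆ t1 ∪ t3; i.e., the part of the middle square lying on or below the line y = 1 is entirely covered by its left and right neighbours. -/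
/-- Top-anchored redundancy: a unit square lying above both a left neighbour and a right
neighbour covers no area of the half-plane `y ≤ 1` beyond what the neighbours cover. -/
theorem top_anchored_middle_redundant (a1 b1 a2 b2 a3 b3 : ℝ)
    (h12 : a1 ≤ a2) (h23 : a2 ≤ a3) (h31 : a3 ≤ a1 + 1)
    (hb12 : b1 ≤ b2) (hb32 : b3 ≤ b2) (hb1 : 0 ≤ b1) (hb3 : 0 ≤ b3) :
    unitSquare a2 b2 ∩ {p : ℝ × ℝ | p.2 ≤ 1} ⊆ unitSquare a1 b1 ∪ unitSquare a3 b3 := by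
  rintro ⟨x, y⟩ ⟨⟨⟨hx1, hx2⟩, ⟨hy1, hy2⟩⟩, hy⟩
  rcases le_or_gt x (a1 + 1) with hx | hx
  · exact Or.inl ⟨⟨h12.trans hx1, hx⟩, ⟨hb12.trans hy1, hy.trans (by linarith)⟩⟩
  · exact Or.inr ⟨⟨by linarith, by linarith⟩, ⟨hb32.trans hy1, hy.trans (by linarith)⟩⟩
end

section
/- Let t0 = [c, c+1] × [d, d+1], t1 = [a1, a1+1] × [b1, b1+1], t2 = [a2, a2+1] × [b2, b2+1], t3 = [a3, a3+1] × [b3, b3+1] be axis-parallel unit squares with c ≤ a1 ≤ a2 ≤ a3 ≤ c+1, d ≤ 0, b3 ≤ 0, b2 ≤ b1, b2 ≤ b3, and b1 ≤ d+1. Then t2 ∩ {(x,y) ∈ ℝ² : y ≥ 0} ⊆ t0 ∪ t1 ∪ t3. -/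
/-- Floating ASC|ASC redundancy: the part of the transition square `t2` lying on or above
the bottom line `y = 0` is covered by the leftmost square `t0`, its left neighbour `t1`
and its right neighbour `t3`. -/
theorem floating_asc_asc_redundant (c d a1 b1 a2 b2 a3 b3 : ℝ)
    (h01 : c ≤ a1) (h12 : a1 ≤ a2) (h23 : a2 ≤ a3) (h30 : a3 ≤ c + 1)
    (hd : d ≤ 0) (hb3 : b3 ≤ 0) (hb21 : b2 ≤ b1) (hb23 : b2 ≤ b3) (hb1d : b1 ≤ d + 1) :
    unitSquare a2 b2 ∩ {p : ℝ × ℝ | 0 ≤ p.2} ⊆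
      unitSquare c d ∪ unitSquare a1 b1 ∪ unitSquare a3 b3 := by
  rintro ⟨x, y⟩ ⟨⟨⟨hx1, hx2⟩, ⟨hy1, hy2⟩⟩, h0⟩
  simp only [Set.mem_setOf_eq] at h0
  simp only [unitSquare, Set.mem_union, Set.mem_prod, Set.mem_Icc]
  rcases le_or_gt x (c + 1) with hxc | hxc
  · rcases le_or_gt y (d + 1) with hyd | hyd
    · exact Or.inl (Or.inl ⟨⟨le_trans h01 (le_trans h12 hx1), hxc⟩, ⟨le_trans hd h0, hyd⟩⟩)
    · exact Or.inl (Or.inr ⟨⟨le_trans h12 hx1, le_trans hxc (by linarith)⟩,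
        ⟨by linarith, by linarith⟩⟩)
  · refine Or.inr ⟨⟨le_trans h30 hxc.le, by linarith⟩, ⟨le_trans hb3 h0, by linarith⟩⟩
end

section
/- Let t1 = [a1, a1+1] × [b1, b1+1], t2 = [a2, a2+1] × [b2, b2+1], t3 = [a3, a3+1] × [b3, b3+1], t4 = [a4, a4+1] × [b4, b4+1] be axis-parallel unit squares with a1 ≤ a2 ≤ a3 ≤ a4 ≤ a1+1, b1 ≤ b2, b1 ≥ 0, b3 ≤ 0, b4 ≥ 0, and b4 ≤ b3+1. Then t2 ∩ {(x,y) ∈ ℝ² : 0 ≤ y ≤ 1} ⊆ t1 ∪ t3 ∪ t4. -/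
/-- Floating ASC|ASC redundancy, case (c): the part of `t2` within the unit slab
`0 ≤ y ≤ 1` is covered by `t1`, `t3` and `t4`. -/
theorem floating_asc_asc_case_c (a1 b1 a2 b2 a3 b3 a4 b4 : ℝ)
    (h12 : a1 ≤ a2) (h23 : a2 ≤ a3) (h34 : a3 ≤ a4) (h41 : a4 ≤ a1 + 1)
    (hb12 : b1 ≤ b2) (hb1 : 0 ≤ b1) (hb3 : b3 ≤ 0) (hb4 : 0 ≤ b4) (hb43 : b4 ≤ b3 + 1) :
    unitSquare a2 b2 ∩ {p : ℝ × ℝ | 0 ≤ p.2 ∧ p.2 ≤ 1} ⊆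
      unitSquare a1 b1 ∪ unitSquare a3 b3 ∪ unitSquare a4 b4 := by
  rintro ⟨x, y⟩ ⟨⟨⟨hx2, hx2'⟩, hy2, hy2'⟩, hy0, hy1⟩
  simp only [unitSquare, Set.mem_union, Set.mem_prod, Set.mem_Icc]
  rcases le_or_gt x (a1 + 1) with hx | hx
  · exact Or.inl (Or.inl ⟨⟨by linarith, hx⟩, by linarith, by linarith⟩)
  · rcases le_or_gt y (b3 + 1) with hy | hy
    · exact Or.inl (Or.inr ⟨⟨by linarith, by linarith⟩, by linarith, hy⟩)
    · exact Or.inr ⟨⟨by linarith, by linarith⟩, by linarith, by linarith⟩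
end

section
/- Let t0 = [a0, a0+1] × [b0, b0+1], t1 = [a1, a1+1] × [b1, b1+1], t2 = [a2, a2+1] × [b2, b2+1], t3 = [a3, a3+1] × [b3, b3+1] be axis-parallel unit squares with a0 ≤ a1 ≤ a2 ≤ a3 ≤ a0+1, b2 ≤ b1 ≤ b0 ≤ 0, b3 ≥ 0, and b3 ≤ b2+1. Then t1 ∩ {(x,y) ∈ ℝ² : y ≥ 0} ⊆ t0 ∪ t2 ∪ t3. -/
/-- Floating DESC|ASC redundancy, Case 1: when three consecutive bottom-intersecting
squares `t0, t1, t2` descend from left to right and `t3` intersects the top line, the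
part of the middle square `t1` on or above `y = 0` is covered by `t0`, `t2` and `t3`. -/
theorem floating_desc_asc_case_1 (a0 b0 a1 b1 a2 b2 a3 b3 : ℝ)
    (h01 : a0 ≤ a1) (h12 : a1 ≤ a2) (h23 : a2 ≤ a3) (h30 : a3 ≤ a0 + 1)
    (hb21 : b2 ≤ b1) (hb10 : b1 ≤ b0) (hb0 : b0 ≤ 0) (hb3 : 0 ≤ b3) (hb32 : b3 ≤ b2 + 1) :
    unitSquare a1 b1 ∩ {p : ℝ × ℝ | 0 ≤ p.2} ⊆
      unitSquare a0 b0 ∪ unitSquare a2 b2 ∪ unitSquare a3 b3 := by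
  rintro ⟨x, y⟩ ⟨⟨⟨hx1, hx2⟩, hy1, hy2⟩, hy0⟩
  simp only [unitSquare, Set.mem_union, Set.mem_prod, Set.mem_Icc, Set.mem_setOf_eq] at *
  by_cases hx : x ≤ a0 + 1
  · exact Or.inl (Or.inl ⟨⟨by linarith, hx⟩, by linarith, by linarith⟩)
  · by_cases hy : y < b3
    · exact Or.inl (Or.inr ⟨⟨by linarith, by linarith⟩, by linarith, by linarith⟩)
    · exact Or.inr ⟨⟨by linarith, by linarith⟩, by linarith, by linarith⟩
end

section
/- Let t0 = [c, c+1] × [d, d+1], t1 = [a1, a1+1] × [b1, b1+1], t2 = [a2, a2+1] × [b2, b2+1], t3 = [a3, a3+1] × [b3, b3+1] be axis-parallel unit squares with c ≤ a1 ≤ a2 ≤ a3 ≤ c+1, b1 ≤ b2 ≤ b3 ≤ 0, d ≥ 0, and d ≤ b1+1. Then t2 ∩ {(x,y) ∈ ℝ² : y ≥ 0} ⊆ t0 ∪ t1 ∪ t3. -/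
/-- Floating DESC|ASC redundancy, Case 3: when the leftmost square `t0` intersects the
top line and `t1, t2, t3` intersect the bottom line and ascend from left to right, the
part of `t2` on or above `y = 0` is covered by `t0`, `t1` and `t3`. -/
theorem floating_desc_asc_case_3 (c d a1 b1 a2 b2 a3 b3 : ℝ)
    (h01 : c ≤ a1) (h12 : a1 ≤ a2) (h23 : a2 ≤ a3) (h30 : a3 ≤ c + 1)
    (hb12 : b1 ≤ b2) (hb23 : b2 ≤ b3) (hb3 : b3 ≤ 0) (hd : 0 ≤ d) (hdb1 : d ≤ b1 + 1) :
    unitSquare a2 b2 ∩ {p : ℝ × ℝ | 0 ≤ p.2} ⊆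
      unitSquare c d ∪ unitSquare a1 b1 ∪ unitSquare a3 b3 := by
  rintro ⟨x, y⟩ ⟨hmem, hy0⟩
  simp only [unitSquare, Set.mem_prod, Set.mem_Icc, Set.mem_setOf_eq, Set.mem_union] at *
  obtain ⟨⟨hx1, hx2⟩, ⟨hy1, hy2⟩⟩ := hmem
  rcases le_or_gt a3 x with hx3 | hx3
  · exact Or.inr ⟨⟨hx3, by linarith⟩, by linarith, by linarith⟩
  · rcases le_or_gt d y with hyd | hyd
    · exact Or.inl (Or.inl ⟨⟨by linarith, by linarith⟩, hyd, by linarith⟩)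
    · exact Or.inl (Or.inr ⟨⟨by linarith, by linarith⟩, by linarith, by linarith⟩)
end

section
/- Let t0 = [c, c+1] × [d, d+1], t1 = [a1, a1+1] × [b1, b1+1], t2 = [a2, a2+1] × [b2, b2+1], t3 = [a3, a3+1] × [b3, b3+1] be axis-parallel unit squares with c ≤ a1 ≤ a2 ≤ a3 ≤ c+1, d ≥ 0, b3 ≥ 0, b1 ≤ b2, b3 ≤ b2, and b1 ≥ d−1. Then t2 ∩ {(x,y) ∈ ℝ² : y ≤ 1} ⊆ t0 ∪ t1 ∪ t3. -/
/-- Floating DESC|DESC redundancy: when `t0`, `t2` and `t3` intersect the top line and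
the transition square `t2` lies above both its neighbours `t1` and `t3`, the part of `t2`
on or below `y = 1` is covered by `t0`, `t1` and `t3`. -/
theorem floating_desc_desc_redundant (c d a1 b1 a2 b2 a3 b3 : ℝ)
    (h01 : c ≤ a1) (h12 : a1 ≤ a2) (h23 : a2 ≤ a3) (h30 : a3 ≤ c + 1)
    (hd : 0 ≤ d) (hb3 : 0 ≤ b3) (hb12 : b1 ≤ b2) (hb32 : b3 ≤ b2) (hb1d : d - 1 ≤ b1) :
    unitSquare a2 b2 ∩ {p : ℝ × ℝ | p.2 ≤ 1} ⊆
      unitSquare c d ∪ unitSquare a1 b1 ∪ unitSquare a3 b3 := by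
  rintro ⟨x, y⟩ ⟨⟨⟨hx1, hx2⟩, hy1, hy2⟩, hy⟩
  simp only [Set.mem_setOf_eq] at hy
  by_cases hx3 : a3 ≤ x
  · right
    exact ⟨⟨hx3, by linarith⟩, by linarith, by linarith⟩
  · push_neg at hx3
    by_cases hyd : d ≤ y
    · left; left
      exact ⟨⟨by linarith, by linarith⟩, hyd, by linarith⟩
    · left; right
      exact ⟨⟨by linarith, by linarith⟩, by linarith, by linarith⟩
end
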